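/- arXiv:2405.00495 — 5 statements merged into one kernel-verified Lean document; each statement's English description precedes it below -/
import Mathlib

section
/- Let s_1,...,s_n be distinct complex numbers and set x_i(s) = s - s_i, ε_i = 1/Π_{j≠i}(s_i - s_j). Then the pseudo-companion matrix S whose first n-1 rows are [x_1, -x_2, 0,...], [x_1, 0, -x_3, ...], ..., [x_1, 0,...,0, -x_n] and whose last row is [ε_1,...,ε_n] is unimodular, i.e., det(S) = 1 (as a polynomial in s). -/
/-!
Put `x k = X - s k` in `ℂ[X]` and `v j = ∏_{k ≠ j} x k`. Each of the first `n` rows of `S` sends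
`v` to `x 0 * v 0 - x (i+1) * v (i+1) = 0`, and the last row sends it to `∑ ε j * v j`, which is
`1` by Lagrange interpolation. By Cramer's rule, `det S * v 0` is the determinant of `S` with its
first column replaced by `S v = (0, …, 0, 1)`, and expanding along that column gives `v 0`.
Cancelling `v 0 ≠ 0` in `ℂ[X]` yields `det S = 1`, and evaluation at `z` gives the theorem.
-/

open Finset Matrix Polynomial

theorem Fin.prod_univ_erase_zero {M : Type*} [CommMonoid M] {n : ℕ} (f : Fin (n + 1) → M) :
    ∏ k ∈ univ.erase 0, f k = ∏ i : Fin n, f i.succ := by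
  rw [Fin.univ_succ, erase_cons, prod_map]
  rfl

theorem Lagrange.sum_C_inv_prod_mul_prod_X_sub_C {F ι : Type*} [Field F] [Fintype ι]
    [DecidableEq ι] [Nonempty ι] {s : ι → F} (hs : Function.Injective s) :
    ∑ i, C (∏ j ∈ univ.erase i, (s i - s j))⁻¹ * ∏ j ∈ univ.erase i, (X - C (s j)) = 1 := by
  rw [← Lagrange.sum_basis hs.injOn univ_nonempty]
  refine sum_congr rfl fun i _ => ?_
  simp only [Lagrange.basis, Lagrange.basisDivisor, ← prod_inv_distrib, map_prod,
    ← prod_mul_distrib]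

namespace Matrix

variable {R : Type*} [CommRing R]

theorem cramer_mulVec {ι : Type*} [Fintype ι] [DecidableEq ι] (A : Matrix ι ι R) (v : ι → R) :
    A.cramer (A *ᵥ v) = A.det • v := by
  rw [cramer_eq_adjugate_mulVec, mulVec_mulVec, adjugate_mul, smul_mulVec, one_mulVec]

variable {n : ℕ}

def pseudoCompanion (x w : Fin (n + 1) → R) : Matrix (Fin (n + 1)) (Fin (n + 1)) R :=
  fun i j =>
    if (i : ℕ) < n then
      (if (j : ℕ) = 0 then x 0 else if (j : ℕ) = (i : ℕ) + 1 then -x j else 0)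
    else w j

theorem pseudoCompanion_castSucc_zero (x w : Fin (n + 1) → R) (i : Fin n) :
    pseudoCompanion x w i.castSucc 0 = x 0 := by
  simp [pseudoCompanion]

theorem pseudoCompanion_castSucc_succ (x w : Fin (n + 1) → R) (i j : Fin n) :
    pseudoCompanion x w i.castSucc j.succ = if j = i then -x j.succ else 0 := by
  simp [pseudoCompanion, Fin.ext_iff]

theorem pseudoCompanion_last (x w : Fin (n + 1) → R) (j : Fin (n + 1)) :
    pseudoCompanion x w (Fin.last n) j = w j := by
  simp [pseudoCompanion]

theorem pseudoCompanion_mulVec_prod_erase (x w : Fin (n + 1) → R) :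
    pseudoCompanion x w *ᵥ (fun j => ∏ k ∈ univ.erase j, x k) =
      Pi.single (Fin.last n) (∑ j, w j * ∏ k ∈ univ.erase j, x k) := by
  ext i
  rcases Fin.eq_castSucc_or_eq_last i with ⟨i, rfl⟩ | rfl
  · rw [Pi.single_eq_of_ne (Fin.castSucc_ne_last i), mulVec, dotProduct, Fin.sum_univ_succ]
    simp only [pseudoCompanion_castSucc_zero, pseudoCompanion_castSucc_succ, ite_mul, zero_mul,
      sum_ite_eq', mem_univ, if_true, neg_mul, mul_prod_erase univ x (mem_univ _)]
    exact add_neg_cancel _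
  · simp [mulVec, dotProduct, pseudoCompanion_last]

theorem det_updateCol_zero_pseudoCompanion_single_last (x w : Fin (n + 1) → R) (c : R) :
    ((pseudoCompanion x w).updateCol 0 (Pi.single (Fin.last n) c)).det =
      c * ∏ i : Fin n, x i.succ := by
  have hminor : ((pseudoCompanion x w).updateCol 0 (Pi.single (Fin.last n) c)).submatrix
      (Fin.last n).succAbove Fin.succ = diagonal fun i => -x i.succ := by
    ext i j
    rcases eq_or_ne i j with rfl | hij
    · simp [pseudoCompanion_castSucc_succ]
    · simp [pseudoCompanion_castSucc_succ, hij, hij.symm]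
  rw [det_succ_column_zero, Fin.sum_univ_castSucc]
  simp only [updateCol_self, Pi.single_eq_of_ne (Fin.castSucc_ne_last _), Pi.single_eq_same,
    mul_zero, zero_mul, sum_const_zero, zero_add, hminor, det_diagonal, prod_neg]
  rw [Fin.val_last, card_univ, Fintype.card_fin]
  linear_combination
    (c * ∏ i : Fin n, x i.succ) * pow_mul_pow_eq_one n (show (-1 : R) * -1 = 1 by norm_num)

theorem det_pseudoCompanion_mul_prod (x w : Fin (n + 1) → R) :
    (pseudoCompanion x w).det * ∏ i : Fin n, x i.succ =
      (∑ j, w j * ∏ k ∈ univ.erase j, x k) * ∏ i : Fin n, x i.succ := by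
  have h := congrFun (cramer_mulVec (pseudoCompanion x w) fun j => ∏ k ∈ univ.erase j, x k) 0
  rw [cramer_apply, pseudoCompanion_mulVec_prod_erase,
    det_updateCol_zero_pseudoCompanion_single_last, Pi.smul_apply, smul_eq_mul,
    Fin.prod_univ_erase_zero] at h
  exact h.symm

theorem det_pseudoCompanion [IsDomain R] (x w : Fin (n + 1) → R)
    (hx : ∀ i : Fin n, x i.succ ≠ 0) :
    (pseudoCompanion x w).det = ∑ j, w j * ∏ k ∈ univ.erase j, x k :=
  mul_right_cancel₀ (prod_ne_zero_iff.mpr fun i _ => hx i) (det_pseudoCompanion_mul_prod x w)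

end Matrix

theorem pseudo_companion_unimodular (n : ℕ) (s : Fin (n + 1) → ℂ)
    (hs : Function.Injective s)
    (ε : Fin (n + 1) → ℂ)
    (hε : ∀ i, ε i = (∏ j ∈ Finset.univ.erase i, (s i - s j))⁻¹)
    (z : ℂ)
    (S : Matrix (Fin (n + 1)) (Fin (n + 1)) ℂ)
    (hS : ∀ i j : Fin (n + 1), S i j =
      if (i : ℕ) < n then
        (if (j : ℕ) = 0 then z - s 0
         else if (j : ℕ) = (i : ℕ) + 1 then -(z - s j) else 0)
      else ε j) :
    S.det = 1 := by
  set P := pseudoCompanion (fun j => X - C (s j)) (fun j => C (ε j))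
  have hSP : S = P.map (eval z) := by
    ext i j
    simp [hS, P, pseudoCompanion, apply_ite (eval z)]
  have hP : P.det = 1 := by
    rw [det_pseudoCompanion _ _ fun i => X_sub_C_ne_zero _]
    simp only [hε]
    exact Lagrange.sum_C_inv_prod_mul_prod_X_sub_C hs
  rw [hSP, ← coe_evalRingHom, ← RingHom.mapMatrix_apply, ← RingHom.map_det, hP, map_one]
end

section
/- Given left points μ^{(1)}_i, μ^{(2)}_l and right points λ^{(1)}_j, λ^{(2)}_m (with the left and right points in each variable disjoint), data v_{i,l} and w_{j,m}, define the 2-D Loewner matrix 𝕃₂ of size q₁q₂ × k₁k₂ with entries (v_{i₁,i₂} - w_{j₁,j₂})/((μ^{(1)}_{i₁} - λ^{(1)}_{j₁})(μ^{(2)}_{i₂} - λ^{(2)}_{j₂})). With Λ₁ = diag(λ^{(1)}) ⊗ I, Λ₂ = I ⊗ diag(λ^{(2)}), M₁ = diag(μ^{(1)}) ⊗ I, M₂ = I ⊗ diag(μ^{(2)}), and V, W, L = 1, R = 1^T the vectorized data, 𝕃₂ satisfies the generalized Sylvester equation M₂M₁𝕃₂ - M₂𝕃₂Λ₁ - M₁𝕃₂Λ₂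 + 𝕃₂Λ₁Λ₂ = V R - L W. -/
theorem loewner2_generalized_sylvester (k1 k2 q1 q2 : ℕ)
    (lam1 : Fin k1 → ℂ) (lam2 : Fin k2 → ℂ) (mu1 : Fin q1 → ℂ) (mu2 : Fin q2 → ℂ)
    (hd1 : ∀ i j, mu1 i ≠ lam1 j) (hd2 : ∀ i j, mu2 i ≠ lam2 j)
    (w : Fin k1 → Fin k2 → ℂ) (v : Fin q1 → Fin q2 → ℂ)
    (L2 : Matrix (Fin q1 × Fin q2) (Fin k1 × Fin k2) ℂ)
    (hL2 : ∀ i j, L2 i j = (v i.1 i.2 - w j.1 j.2) /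
      ((mu1 i.1 - lam1 j.1) * (mu2 i.2 - lam2 j.2))) :
    Matrix.diagonal (fun i : Fin q1 × Fin q2 => mu2 i.2) *
        (Matrix.diagonal (fun i : Fin q1 × Fin q2 => mu1 i.1) * L2) -
      Matrix.diagonal (fun i : Fin q1 × Fin q2 => mu2 i.2) * L2 *
        Matrix.diagonal (fun j : Fin k1 × Fin k2 => lam1 j.1) -
      Matrix.diagonal (fun i : Fin q1 × Fin q2 => mu1 i.1) * L2 *
        Matrix.diagonal (fun j : Fin k1 × Fin k2 => lam2 j.2) +
      L2 * (Matrix.diagonal (fun j : Fin k1 × Fin k2 => lam1 j.1) *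
        Matrix.diagonal (fun j : Fin k1 × Fin k2 => lam2 j.2)) =
    (Matrix.of fun (i : Fin q1 × Fin q2) (_ : Unit) => v i.1 i.2) *
        (Matrix.of fun (_ : Unit) (_ : Fin k1 × Fin k2) => (1 : ℂ)) -
      (Matrix.of fun (_ : Fin q1 × Fin q2) (_ : Unit) => (1 : ℂ)) *
        (Matrix.of fun (_ : Unit) (j : Fin k1 × Fin k2) => w j.1 j.2) := by
  ext i j
  have e1 : mu1 i.1 - lam1 j.1 ≠ 0 := sub_ne_zero.mpr (hd1 i.1 j.1)
  have e2 : mu2 i.2 - lam2 j.2 ≠ 0 := sub_ne_zero.mpr (hd2 i.2 j.2)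
  simp only [Matrix.sub_apply, Matrix.add_apply, Matrix.diagonal_mul_diagonal,
    Matrix.diagonal_mul, Matrix.mul_diagonal, hL2]
  simp only [Matrix.mul_apply, Matrix.of_apply, Fintype.sum_unique]
  field_simp
  ring
end

section
/- In the 2-D Loewner setup, if X solves M₂X - XΛ₂ = V R - L W (with entry formula X_{(i₁,i₂),(j₁,j₂)} = (v_{i₁,i₂} - w_{j₁,j₂})/(μ^{(2)}_{i₂} - λ^{(2)}_{j₂})), then the 2-D Loewner matrix 𝕃₂ solves M₁𝕃₂ - 𝕃₂Λ₁ = X; i.e., the 2-D Loewner matrix is the solution of the coupled pair of Sylvester equations. -/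
theorem loewner2_coupled_sylvester (k1 k2 q1 q2 : ℕ)
    (lam1 : Fin k1 → ℂ) (lam2 : Fin k2 → ℂ) (mu1 : Fin q1 → ℂ) (mu2 : Fin q2 → ℂ)
    (hd1 : ∀ i j, mu1 i ≠ lam1 j) (hd2 : ∀ i j, mu2 i ≠ lam2 j)
    (w : Fin k1 → Fin k2 → ℂ) (v : Fin q1 → Fin q2 → ℂ)
    (L2 : Matrix (Fin q1 × Fin q2) (Fin k1 × Fin k2) ℂ)
    (hL2 : ∀ i j, L2 i j = (v i.1 i.2 - w j.1 j.2) /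
      ((mu1 i.1 - lam1 j.1) * (mu2 i.2 - lam2 j.2)))
    (X : Matrix (Fin q1 × Fin q2) (Fin k1 × Fin k2) ℂ)
    (hX : ∀ i j, X i j = (v i.1 i.2 - w j.1 j.2) / (mu2 i.2 - lam2 j.2))
    (hXsolves : Matrix.diagonal (fun i : Fin q1 × Fin q2 => mu2 i.2) * X -
        X * Matrix.diagonal (fun j : Fin k1 × Fin k2 => lam2 j.2) =
      (Matrix.of fun (i : Fin q1 × Fin q2) (_ : Unit) => v i.1 i.2) *
          (Matrix.of fun (_ : Unit) (_ : Fin k1 × Fin k2) => (1 : ℂ)) -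
        (Matrix.of fun (_ : Fin q1 × Fin q2) (_ : Unit) => (1 : ℂ)) *
          (Matrix.of fun (_ : Unit) (j : Fin k1 × Fin k2) => w j.1 j.2)) :
    Matrix.diagonal (fun i : Fin q1 × Fin q2 => mu1 i.1) * L2 -
      L2 * Matrix.diagonal (fun j : Fin k1 × Fin k2 => lam1 j.1) = X := by
  ext i j
  simp only [Matrix.sub_apply, Matrix.diagonal_mul, Matrix.mul_diagonal, hL2, hX]
  have h1 : mu1 i.1 - lam1 j.1 ≠ 0 := sub_ne_zero.mpr (hd1 i.1 j.1)
  have h2 : mu2 i.2 - lam2 j.2 ≠ 0 := sub_ne_zero.mpr (hd2 i.2 j.2)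
  field_simp
end

section
/- Let k ≥ 2 and d = k - 1. Suppose f is a rational function of degree at most d (numerator and denominator), sampled at distinct right points λ_1,...,λ_k with values w_j and distinct left points μ_1,...,μ_q (disjoint from the λ_j, q ≥ k) with values v_i, all poles avoided. Then the vector c = (c_1,...,c_k) with c_j = q(λ_j)/Π_{i≠j}(λ_j - λ_i) lies in the null space of the 1-D Loewner matrix 𝕃 with entries (v_i - w_j)/(μ_i - λ_j), where q is the denominator of f. -/
open Finset Polynomial

-- coeff (k-1) of Lagrange basis
lemma basis_coeff {k : ℕ} (hk : 1 ≤ k) (lam : Fin k → ℂ) (hlam : Function.Injective lam)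
    (j : Fin k) :
    (Lagrange.basis Finset.univ lam j).coeff (k - 1)
      = (∏ i ∈ Finset.univ.erase j, (lam j - lam i))⁻¹ := by
  have hinj : Set.InjOn lam ↑(Finset.univ : Finset (Fin k)) := Set.injOn_of_injective hlam
  have hnd : (Lagrange.basis Finset.univ lam j).natDegree = k - 1 := by
    rw [Lagrange.natDegree_basis hinj (mem_univ j)]
    simp
  rw [← hnd, Polynomial.coeff_natDegree]
  unfold Lagrange.basis
  rw [Polynomial.leadingCoeff_prod, ← Finset.prod_inv_distrib]
  refine Finset.prod_congr rfl fun i hi => ?_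
  have hne : lam j ≠ lam i := fun h => (mem_erase.mp hi).1 (hlam h).symm
  rw [Lagrange.basisDivisor, leadingCoeff_mul, leadingCoeff_X_sub_C, leadingCoeff_C, mul_one]

lemma sum_eq_zero_of_degree_lt {k : ℕ} (hk : 1 ≤ k) (lam : Fin k → ℂ)
    (hlam : Function.Injective lam) (h : Polynomial ℂ) (hdeg : h.degree < (k - 1 : ℕ)) :
    ∑ j : Fin k, h.eval (lam j) / ∏ i ∈ Finset.univ.erase j, (lam j - lam i) = 0 := by
  have hinj : Set.InjOn lam ↑(Finset.univ : Finset (Fin k)) := Set.injOn_of_injective hlam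
  have hcard : (Finset.univ : Finset (Fin k)).card = k := by simp
  have hrep : h = Lagrange.interpolate Finset.univ lam (fun j => h.eval (lam j)) := by
    apply Lagrange.eq_interpolate hinj
    rw [hcard]
    exact hdeg.trans_le (by exact_mod_cast Nat.cast_le.mpr (Nat.sub_le k 1))
  have h0 : h.coeff (k - 1) = 0 := coeff_eq_zero_of_degree_lt hdeg
  have := congrArg (fun g => Polynomial.coeff g (k - 1)) hrep
  simp only [h0, Lagrange.interpolate_apply, Polynomial.finset_sum_coeff,
    Polynomial.coeff_C_mul] at this
  rw [Finset.sum_congr rfl (fun j _ => by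
    rw [basis_coeff hk lam hlam j])] at this
  simp_rw [div_eq_mul_inv]
  exact this.symm
theorem barycentric_weights_in_loewner_nullspace (k qn : ℕ) (hk : 2 ≤ k) (hkq : k ≤ qn)
    (p qden : Polynomial ℂ)
    (hp : p.natDegree ≤ k - 1) (hqd : qden.natDegree ≤ k - 1)
    (lam : Fin k → ℂ) (mu : Fin qn → ℂ)
    (hlam : Function.Injective lam) (hmu : Function.Injective mu)
    (hdisj : ∀ i j, mu i ≠ lam j)
    (hql : ∀ j, qden.eval (lam j) ≠ 0) (hqm : ∀ i, qden.eval (mu i) ≠ 0)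
    (w : Fin k → ℂ) (v : Fin qn → ℂ)
    (hw : ∀ j, w j = p.eval (lam j) / qden.eval (lam j))
    (hv : ∀ i, v i = p.eval (mu i) / qden.eval (mu i))
    (c : Fin k → ℂ)
    (hc : ∀ j, c j = qden.eval (lam j) / ∏ i ∈ Finset.univ.erase j, (lam j - lam i)) :
    (Matrix.of fun i j => (v i - w j) / (mu i - lam j)).mulVec c = 0 := by
  funext i
  set g : Polynomial ℂ := Polynomial.C (v i) * qden - p with hg
  have hroot : g.IsRoot (mu i) := by
    simp [hg, Polynomial.IsRoot, hv i, div_mul_cancel₀ _ (hqm i)]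
  set h : Polynomial ℂ := g / (Polynomial.X - Polynomial.C (mu i)) with hh
  have hfac : (Polynomial.X - Polynomial.C (mu i)) * h = g :=
    (Polynomial.mul_div_eq_iff_isRoot).mpr hroot
  have hgdeg : g.natDegree ≤ k - 1 := by
    refine (Polynomial.natDegree_sub_le _ _).trans (max_le ?_ hp)
    exact (Polynomial.natDegree_C_mul_le _ _).trans hqd
  have hdeg : h.degree < ((k - 1 : ℕ) : WithBot ℕ) := by
    by_cases h0 : h = 0
    · simp only [h0, Polynomial.degree_zero]
      exact WithBot.bot_lt_coe _
    · rw [← Polynomial.natDegree_lt_iff_degree_lt h0]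
      have hX : (Polynomial.X - Polynomial.C (mu i)) ≠ 0 := Polynomial.X_sub_C_ne_zero _
      have : g.natDegree = 1 + h.natDegree := by
        rw [← hfac, Polynomial.natDegree_mul hX h0, Polynomial.natDegree_X_sub_C]
      omega
  have heval : ∀ j, (lam j - mu i) * h.eval (lam j) = v i * qden.eval (lam j) - p.eval (lam j) := by
    intro j
    have := congrArg (Polynomial.eval (lam j)) hfac
    simpa [hg] using this
  have hterm : ∀ j : Fin k,
      (v i - w j) / (mu i - lam j) * c j
        = -(h.eval (lam j) / ∏ l ∈ Finset.univ.erase j, (lam j - lam l)) := by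
    intro j
    have hprod : (∏ l ∈ Finset.univ.erase j, (lam j - lam l)) ≠ 0 := by
      refine Finset.prod_ne_zero_iff.mpr fun l hl => sub_ne_zero.mpr fun hEq => ?_
      exact (Finset.mem_erase.mp hl).1 (hlam hEq).symm
    have hml : mu i - lam j ≠ 0 := sub_ne_zero.mpr (hdisj i j)
    have key : v i - w j = (lam j - mu i) * h.eval (lam j) / qden.eval (lam j) := by
      rw [hw j, eq_div_iff (hql j), sub_mul, div_mul_cancel₀ _ (hql j)]
      linear_combination -heval j
    have e1 : (v i - w j) / (mu i - lam j) = -(h.eval (lam j) / qden.eval (lam j)) := by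
      rw [key, div_div, ← neg_div, div_eq_div_iff (mul_ne_zero (hql j) hml) (hql j)]
      ring
    rw [e1, hc j, neg_mul, div_mul_div_comm, mul_comm (Polynomial.eval (lam j) h),
      mul_div_mul_left _ _ (hql j)]
  show ∑ j, (Matrix.of fun i j => (v i - w j) / (mu i - lam j)) i j * c j = 0
  calc ∑ j, (v i - w j) / (mu i - lam j) * c j
      = -∑ j, h.eval (lam j) / ∏ l ∈ Finset.univ.erase j, (lam j - lam l) := by
        rw [← Finset.sum_neg_distrib]
        exact Finset.sum_congr rfl fun j _ => hterm j
    _ = 0 := by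
        rw [sum_eq_zero_of_degree_lt (by omega) lam hlam h hdeg, neg_zero]
end

section
/- Let flop₁(k₁,...,k_n) = Σ_{j=1}^n k_j³ Π_{l<j} k_l. Among all orderings (permutations) of fixed positive integers k₁,...,k_n ≥ 2, flop₁ is minimized when the sequence is arranged in decreasing order, i.e., k₁ ≥ k₂ ≥ ... ≥ k_n. -/
/-!
Insertion sort into non-increasing order never increases the cost. Writing the cost in Horner form
`c (x :: l) = x³ + x * c l`, inserting `x` past a larger `y` exchanges `x³ + x y³` for `y³ + y x³`,
and `(x³ + x y³) - (y³ + y x³) = (y - x) (x y (x + y) - x² - x y - y²) ≥ 0` once `2 ≤ x ≤ y`.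
The decreasing arrangement is the insertion sort of every rearrangement.
-/

/-- The recursive 1-D Loewner null space cost functional. -/
def flop1 (n : ℕ) (k : Fin n → ℕ) : ℕ :=
  ∑ j : Fin n, k j ^ 3 * ∏ l ∈ Finset.univ.filter (fun l => l < j), k l

open List

/-- `flop1` in Horner form, on lists. -/
def flopList : List ℕ → ℕ
  | [] => 0
  | x :: l => x ^ 3 + x * flopList l

theorem flop1_succ (n : ℕ) (k : Fin (n + 1) → ℕ) :
    flop1 (n + 1) k = k 0 ^ 3 + k 0 * flop1 n (fun i => k i.succ) := by
  simp only [flop1, Finset.prod_filter, Fin.sum_univ_succ, Fin.prod_univ_succ,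
    Fin.succ_lt_succ_iff, Fin.succ_pos, Fin.not_lt_zero, if_true, if_false, Finset.prod_const_one,
    mul_one, Finset.mul_sum]
  congr 1
  exact Finset.sum_congr rfl fun _ _ => by ring

theorem flop1_eq_flopList (n : ℕ) (k : Fin n → ℕ) : flop1 n k = flopList (ofFn k) := by
  induction n with
  | zero => simp [flop1, flopList]
  | succ n ih => rw [flop1_succ, ih, ofFn_succ, flopList]

theorem flopList_cons_le_cons (x : ℕ) {l l' : List ℕ} (h : flopList l ≤ flopList l') :
    flopList (x :: l) ≤ flopList (x :: l') :=
  Nat.add_le_add_left (Nat.mul_le_mul_left x h) _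

theorem flopList_swap_le {x y : ℕ} (hx : 2 ≤ x) (hxy : x ≤ y) (l : List ℕ) :
    flopList (y :: x :: l) ≤ flopList (x :: y :: l) := by
  have key : y ^ 3 + y * x ^ 3 ≤ x ^ 3 + x * y ^ 3 := by
    have h : x ^ 2 + x * y + y ^ 2 ≤ x * y * (x + y) := by nlinarith
    nlinarith [Nat.mul_le_mul_left (y - x) h, Nat.sub_add_cancel hxy]
  simp only [flopList]
  nlinarith

theorem flopList_orderedInsert_le {x : ℕ} (hx : 2 ≤ x) (l : List ℕ) :
    flopList (l.orderedInsert (· ≥ ·) x) ≤ flopList (x :: l) := by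
  induction l with
  | nil => rfl
  | cons y l ih =>
    rw [orderedInsert_cons]
    split_ifs with hyx
    · rfl
    · calc flopList (y :: l.orderedInsert (· ≥ ·) x)
          ≤ flopList (y :: x :: l) := flopList_cons_le_cons y ih
        _ ≤ flopList (x :: y :: l) := flopList_swap_le hx (by omega) l

theorem flopList_insertionSort_le {l : List ℕ} (hl : ∀ x ∈ l, 2 ≤ x) :
    flopList (l.insertionSort (· ≥ ·)) ≤ flopList l := by
  induction l with
  | nil => rfl
  | cons x l ih =>
    rw [insertionSort_cons]
    calc flopList ((l.insertionSort (· ≥ ·)).orderedInsert (· ≥ ·) x)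
        ≤ flopList (x :: l.insertionSort (· ≥ ·)) :=
          flopList_orderedInsert_le (hl x mem_cons_self) _
      _ ≤ flopList (x :: l) :=
          flopList_cons_le_cons x (ih fun y hy => hl y (mem_cons_of_mem x hy))

theorem decreasing_order_minimizes_flops (n : ℕ) (k : Fin n → ℕ)
    (hk : ∀ l, 2 ≤ k l) (hsorted : Antitone k) :
    ∀ σ : Equiv.Perm (Fin n), flop1 n k ≤ flop1 n (k ∘ σ) := by
  intro σ
  have hsort : (ofFn (k ∘ σ)).insertionSort (· ≥ ·) = ofFn k :=
    Perm.eq_of_sortedGE sortedGE_insertionSort (sortedGE_ofFn_iff.2 hsorted)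
      ((perm_insertionSort _ _).trans (σ.ofFn_comp_perm k))
  rw [flop1_eq_flopList, flop1_eq_flopList, ← hsort]
  exact flopList_insertionSort_le fun x hx => by
    obtain ⟨i, rfl⟩ := mem_ofFn.1 hx
    exact hk (σ i)
end
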